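/- Let (R, 𝔪) be an Artinian local ring and let φ : B → C be an injective homomorphism of R-algebras with C flat over R. Then B is flat over R if and only if the kernel of the composite B → C → C/𝔪C equals 𝔪B. -/

import Mathlib

/-!
Let `𝔪` be the maximal ideal; it is nilpotent. If `B` is flat, pick `a ≠ 0` with `a 𝔪 = 0`.
For `x ∈ B` with `φ x ∈ 𝔪C` we get `a φ(x) = 0`, hence `a x = 0`, and the equational criterion
for flatness writes `x` as a combination of elements of `B` with coefficients in `Ann(a) ⊆ 𝔪`.

Conversely, if the kernel is `𝔪B` then `B/𝔪B → C/𝔪C` is an injective map of `R/𝔪`-vector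
spaces, hence split, so `N ⊗ B → N ⊗ C` is injective whenever `𝔪N = 0`. Since `C` is flat,
induction along `0 → 𝔪N → N → N/𝔪N → 0` extends this to every `N` killed by a power of `𝔪`,
i.e. to every `N`. For an ideal `I`, the injectivity of `I ⊗ B → I ⊗ C → C` then shows that
`I ⊗ B → B` is injective.
-/

open TensorProduct LinearMap IsLocalRing

section

variable {R M M' : Type*} [CommRing R] [AddCommGroup M] [Module R M]
  [AddCommGroup M'] [Module R M']

theorem Ideal.exists_ne_zero_forall_mul_eq_zero_of_isNilpotent [Nontrivial R] {I : Ideal R}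
    (hI : IsNilpotent I) : ∃ a : R, a ≠ 0 ∧ ∀ r ∈ I, a * r = 0 := by
  classical
  have hex : ∃ n, I ^ n = ⊥ := hI
  obtain ⟨k, hk⟩ : ∃ k, Nat.find hex = k + 1 := by
    refine Nat.exists_eq_succ_of_ne_zero fun h0 => ?_
    have := Nat.find_spec hex
    rw [h0, pow_zero, Ideal.one_eq_top] at this
    exact top_ne_bot this
  have hne : I ^ k ≠ ⊥ := Nat.find_min hex (by omega)
  obtain ⟨a, ha, ha0⟩ := Submodule.exists_mem_ne_zero_of_ne_bot hne
  refine ⟨a, ha0, fun r hr => ?_⟩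
  have : a * r ∈ I ^ (k + 1) := pow_succ I k ▸ Ideal.mul_mem_mul ha hr
  rwa [← hk, Nat.find_spec hex, Ideal.mem_bot] at this

theorem Module.Flat.mem_annihilator_smul_top_of_smul_eq_zero [Module.Flat R M] {a : R} {x : M}
    (h : a • x = 0) : x ∈ (R ∙ a).annihilator • (⊤ : Submodule R M) := by
  obtain ⟨k, c, y, hx, hc⟩ := Module.Flat.isTrivialRelation_of_sum_smul_eq_zero
    (ι := Unit) (f := fun _ => a) (x := fun _ => x) (by simpa using h)
  rw [show x = _ from hx ()]
  refine Submodule.sum_mem _ fun j _ => Submodule.smul_mem_smul ?_ trivial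
  simpa [Submodule.mem_annihilator_span_singleton, mul_comm] using hc j

theorem Module.Flat.comap_maximalIdeal_smul_top_eq [IsArtinianRing R] [IsLocalRing R]
    [Module.Flat R M] {f : M →ₗ[R] M'} (hf : Function.Injective f) :
    (maximalIdeal R • ⊤ : Submodule R M').comap f = maximalIdeal R • ⊤ := by
  refine le_antisymm (fun x hx => ?_) (Submodule.smul_top_le_comap_smul_top _ f)
  obtain ⟨a, ha0, ha⟩ := Ideal.exists_ne_zero_forall_mul_eq_zero_of_isNilpotent
    ((isArtinianRing_iff_isNilpotent_maximalIdeal R).mp ‹_›)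
  have hafx : a • f x = 0 := by
    refine Submodule.smul_induction_on hx (fun r hr y _ => ?_) (fun y z hy hz => ?_)
    · rw [smul_smul, ha r hr, zero_smul]
    · rw [smul_add, hy, hz, add_zero]
  have hax : a • x = 0 := hf (by rw [map_smul, hafx, map_zero])
  have hann : (R ∙ a).annihilator ≤ maximalIdeal R := le_maximalIdeal fun htop => ha0 <| by
    simpa only [one_smul] using
      (Submodule.mem_annihilator_span_singleton a (1 : R)).mp (htop ▸ Submodule.mem_top)
  exact Submodule.smul_mono_left hann (mem_annihilator_smul_top_of_smul_eq_zero hax)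

theorem lTensor_mkQ_smul_top_injective {I : Ideal R} {N : Type*} [AddCommGroup N] [Module R N]
    (hN : I ≤ Module.annihilator R N) :
    Function.Injective (lTensor N (I • (⊤ : Submodule R M)).mkQ) := by
  rw [← ker_eq_bot, lTensor_mkQ, range_eq_bot]
  refine TensorProduct.ext' fun n ⟨x, hx⟩ => ?_
  simp only [lTensor_tmul, Submodule.subtype_apply, LinearMap.zero_apply]
  refine Submodule.smul_induction_on hx (fun r hr y _ => ?_) (fun y z hy hz => ?_)
  · rw [← smul_tmul, Module.mem_annihilator.mp (hN hr) n, zero_tmul]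
  · rw [tmul_add, hy, hz, add_zero]

theorem exists_comp_eq_mkQ_of_comap_smul_top_le (I : Ideal R) [I.IsMaximal] {f : M →ₗ[R] M'}
    (hf : (I • ⊤ : Submodule R M').comap f ≤ I • ⊤) :
    ∃ g : M' →ₗ[R] M ⧸ (I • ⊤ : Submodule R M), g ∘ₗ f = (I • ⊤ : Submodule R M).mkQ := by
  set p : Submodule R M := I • ⊤
  set q : Submodule R M' := I • ⊤
  let fbar := p.mapQ q f (Submodule.smul_top_le_comap_smul_top I f)
  have hfbar : Function.Injective fbar := by
    rw [injective_iff_map_eq_zero]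
    rintro ⟨x⟩ hx
    exact (Submodule.Quotient.mk_eq_zero p).mpr (hf ((Submodule.Quotient.mk_eq_zero q).mp hx))
  let := Ideal.Quotient.field I
  have hsurj : Function.Surjective (algebraMap R (R ⧸ I)) := Ideal.Quotient.mk_surjective
  obtain ⟨s, hs⟩ := (fbar.extendScalarsOfSurjective hsurj).exists_leftInverse_of_injective
    (ker_eq_bot.mpr hfbar)
  refine ⟨s.restrictScalars R ∘ₗ q.mkQ, LinearMap.ext fun x => ?_⟩
  exact congr($hs (p.mkQ x))

theorem lTensor_injective_of_le_annihilator (I : Ideal R) [I.IsMaximal] {f : M →ₗ[R] M'}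
    (hf : (I • ⊤ : Submodule R M').comap f ≤ I • ⊤) {N : Type*} [AddCommGroup N] [Module R N]
    (hN : I ≤ Module.annihilator R N) : Function.Injective (lTensor N f) := by
  obtain ⟨g, hg⟩ := exists_comp_eq_mkQ_of_comap_smul_top_le I hf
  have h := lTensor_mkQ_smul_top_injective (M := M) hN
  rw [← hg, lTensor_comp, coe_comp] at h
  exact h.of_comp

theorem lTensor_injective_of_exact [Module.Flat R M'] (f : M →ₗ[R] M')
    {N₁ N₂ N₃ : Type*} [AddCommGroup N₁] [Module R N₁] [AddCommGroup N₂] [Module R N₂]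
    [AddCommGroup N₃] [Module R N₃] {i : N₁ →ₗ[R] N₂} {p : N₂ →ₗ[R] N₃}
    (hi : Function.Injective i) (hp : Function.Surjective p) (hip : Function.Exact i p)
    (h₁ : Function.Injective (lTensor N₁ f)) (h₃ : Function.Injective (lTensor N₃ f)) :
    Function.Injective (lTensor N₂ f) := by
  rw [injective_iff_map_eq_zero]
  intro z hz
  have hpz : rTensor M p z = 0 := h₃ <| by
    rw [← comp_apply, lTensor_comp_rTensor, ← rTensor_comp_lTensor, comp_apply, hz,
      map_zero, map_zero]
  obtain ⟨y, rfl⟩ := (rTensor_exact M hip hp z).mp hpz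
  have hy : lTensor N₁ f y = 0 := Module.Flat.rTensor_preserves_injective_linearMap i hi <| by
    rw [← comp_apply, rTensor_comp_lTensor, ← lTensor_comp_rTensor, comp_apply, hz, map_zero]
  rw [h₁ (hy.trans (map_zero _).symm), map_zero]

theorem lTensor_injective_of_pow_le_annihilator [Module.Flat R M'] (I : Ideal R) [I.IsMaximal]
    {f : M →ₗ[R] M'} (hf : (I • ⊤ : Submodule R M').comap f ≤ I • ⊤) (n : ℕ)
    {N : Type*} [AddCommGroup N] [Module R N] (hN : I ^ n ≤ Module.annihilator R N) :
    Function.Injective (lTensor N f) := by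
  induction n generalizing N with
  | zero =>
    have : Subsingleton N := Module.annihilator_eq_top_iff.mp (top_le_iff.mp (by simpa using hN))
    exact Function.injective_of_subsingleton _
  | succ n ih =>
    set P : Submodule R N := I • ⊤
    have hP : I ^ n ≤ Module.annihilator R P := by
      rw [Submodule.le_annihilator_iff, ← Submodule.mul_smul, ← pow_succ,
        ← Submodule.le_annihilator_iff, Submodule.annihilator_top]
      exact hN
    have hquot : I ≤ Module.annihilator R (N ⧸ P) :=
      (Module.isTorsionBySet_iff_subset_annihilator R _).mp
        (Module.isTorsionBySet_quotient_ideal_smul N I)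
    exact lTensor_injective_of_exact f P.injective_subtype P.mkQ_surjective
      (LinearMap.exact_subtype_mkQ P) (ih hP) (lTensor_injective_of_le_annihilator I hf hquot)

theorem Module.Flat.of_lTensor_injective [Module.Flat R M'] (f : M →ₗ[R] M')
    (hf : ∀ I : Ideal R, Function.Injective (lTensor I f)) : Module.Flat R M := by
  rw [Module.Flat.iff_rTensor_injective']
  intro I
  have h := (Module.Flat.rTensor_preserves_injective_linearMap (M := M') I.subtype
    I.injective_subtype).comp (hf I)
  rw [← coe_comp, rTensor_comp_lTensor, ← lTensor_comp_rTensor, coe_comp] at h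
  exact h.of_comp

theorem IsArtinianRing.flat_iff_comap_maximalIdeal_smul_top_eq [IsArtinianRing R] [IsLocalRing R]
    [Module.Flat R M'] {f : M →ₗ[R] M'} (hf : Function.Injective f) :
    Module.Flat R M ↔ (maximalIdeal R • ⊤ : Submodule R M').comap f = maximalIdeal R • ⊤ := by
  refine ⟨fun _ => Module.Flat.comap_maximalIdeal_smul_top_eq hf, fun h => ?_⟩
  obtain ⟨n, hn⟩ := (isArtinianRing_iff_isNilpotent_maximalIdeal R).mp ‹_›
  refine Module.Flat.of_lTensor_injective f fun I =>
    lTensor_injective_of_pow_le_annihilator (maximalIdeal R) h.le n ?_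
  rw [hn]
  exact bot_le

end

/-- Let `(R, 𝔪)` be an Artinian local ring and `φ : B → C` an injective homomorphism of
`R`-algebras with `C` flat over `R`.  Then `B` is flat over `R` iff the kernel of the
composite `B → C → C/𝔪C` equals `𝔪B`. -/
theorem stmt7 {R : Type*} [CommRing R] [IsArtinianRing R] [IsLocalRing R]
    {B C : Type*} [CommRing B] [CommRing C] [Algebra R B] [Algebra R C]
    (φ : B →ₐ[R] C) (hφ : Function.Injective φ) [Module.Flat R C] :
    Module.Flat R B ↔
      RingHom.ker ((Ideal.Quotient.mk
          (Ideal.map (algebraMap R C) (IsLocalRing.maximalIdeal R))).comp φ.toRingHom) =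
        Ideal.map (algebraMap R B) (IsLocalRing.maximalIdeal R) := by
  rw [IsArtinianRing.flat_iff_comap_maximalIdeal_smul_top_eq (f := φ.toLinearMap) hφ,
    Ideal.smul_top_eq_map, Ideal.smul_top_eq_map, ← RingHom.comap_ker, Ideal.mk_ker]
  exact Submodule.restrictScalars_inj R B B (V₁ := Ideal.comap φ.toRingHom _)
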